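/- arXiv:2011.07838 — 2 statements merged into one kernel-verified Lean document; each statement's English description precedes it below -/
import Mathlib

section
/- On an arbitrary finite alphabet, for any infinite word w and letters α ≠ β: (1) if L_α(w) is recurrent then w is recurrent; (2) if R_β(αw) is recurrent then αw is recurrent. -/
set_option linter.unusedSectionVars false


universe u
variable {A : Type u}

/-- Apply a substitution (given by images of letters) to a finite word. -/
def applyList (f : A → List A) (u : List A) : List A := u.flatMap f

/-- Starting position of the image of the `n`-th letter of `v` inside `f(v)`. -/
def blockStart (f : A → List A) (v : ℕ → A) : ℕ → ℕ
  | 0 => 0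
  | n + 1 => blockStart f v n + (f (v n)).length

/-- `ApplyEq f v u` means `u = f(v)` for right-infinite words. -/
def ApplyEq (f : A → List A) (v u : ℕ → A) : Prop :=
  ∀ (n i : ℕ) (h : i < (f (v n)).length),
    u (blockStart f v n + i) = (f (v n))[i]

/-- `u` occurs as a factor of `w` at position `k`. -/
def FactorAt (w : ℕ → A) (u : List A) (k : ℕ) : Prop :=
  ∀ (i : ℕ) (h : i < u.length), u[i] = w (k + i)

def Factor (w : ℕ → A) (u : List A) : Prop := ∃ k, FactorAt w u k

/-- `u` is a prefix of the infinite word `w`. -/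
def PrefixOf (u : List A) (w : ℕ → A) : Prop :=
  ∀ (i : ℕ) (h : i < u.length), u[i] = w i

/-- Membership in the stable set of a set `S` of substitutions. -/
def InStable (S : Set (A → List A)) (w : ℕ → A) : Prop :=
  ∃ (σ : ℕ → A → List A) (ws : ℕ → ℕ → A),
    (∀ n, σ n ∈ S) ∧ ws 0 = w ∧ ∀ n, ApplyEq (σ n) (ws (n + 1)) (ws n)

/-- Composition `σ_1 ∘ ⋯ ∘ σ_n` of the first `n` substitutions of `s` (0-indexed). -/
def compSeq (s : ℕ → A → List A) : ℕ → A → List A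
  | 0 => fun a => [a]
  | n + 1 => fun a => applyList (compSeq s n) (s n a)

/-- `w` is S-adic with directive sequence `σ`. -/
def SAdicWith (σ : ℕ → A → List A) (w : ℕ → A) : Prop :=
  ∃ a : ℕ → A, (∀ n, PrefixOf (compSeq σ n (a n)) w) ∧
    ∀ N : ℕ, ∃ n, N ≤ (compSeq σ n (a n)).length


variable [DecidableEq A]

/-- `L_α`: `α ↦ α`, `γ ↦ αγ` for `γ ≠ α`. -/
def Lsub (α : A) : A → List A := fun γ => if γ = α then [α] else [α, γ]

/-- `R_α`: `α ↦ α`, `γ ↦ γα` for `γ ≠ α`. -/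
def Rsub (α : A) : A → List A := fun γ => if γ = α then [α] else [γ, α]

/-- An infinite word is recurrent: every factor occurs at arbitrarily large
positions. -/
def Recurrent (w : ℕ → A) : Prop :=
  ∀ (u : List A) (k : ℕ), FactorAt w u k → ∀ N : ℕ, ∃ m, N ≤ m ∧ FactorAt w u m

section Aux

variable {w u : ℕ → A} {α β : A}

theorem applyList_cons (f : A → List A) (a : A) (p : List A) :
    applyList f (a :: p) = f a ++ applyList f p := by
  simp [applyList]

theorem factorAt_append_left {x y : List A} {m : ℕ}
    (h : FactorAt u (x ++ y) m) : FactorAt u x m := by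
  intro i hi
  have h2 := h i (by simp; omega)
  rwa [List.getElem_append_left hi] at h2

theorem factorAt_append_right {x y : List A} {m : ℕ}
    (h : FactorAt u (x ++ y) m) : FactorAt u y (m + x.length) := by
  intro i hi
  have h2 := h (x.length + i) (by simp; omega)
  rw [List.getElem_append_right (by omega)] at h2
  simp only [Nat.add_sub_cancel_left] at h2
  rw [h2]
  congr 1
  omega

theorem factorAt_append_of {x y : List A} {m : ℕ}
    (h1 : FactorAt u x m) (h2 : FactorAt u y (m + x.length)) :
    FactorAt u (x ++ y) m := by
  intro i hi
  rcases lt_or_ge i x.length with h | h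
  · rw [List.getElem_append_left h]; exact h1 i h
  · rw [List.getElem_append_right h]
    have h3 := h2 (i - x.length) (by simp at hi; omega)
    rw [h3]
    congr 1
    omega

theorem factorAt_cons' {a : A} {p : List A} {k : ℕ} (h : FactorAt u (a :: p) k) :
    u k = a ∧ FactorAt u p (k + 1) := by
  constructor
  · exact (h 0 (by simp)).symm
  · intro i hi
    have h2 := h (i + 1) (by simp; omega)
    rw [List.getElem_cons_succ] at h2
    rw [h2]
    congr 1
    omega

theorem factorAt_cons_of {a : A} {p : List A} {k : ℕ} (h0 : u k = a)
    (h : FactorAt u p (k + 1)) : FactorAt u (a :: p) k := by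
  intro i hi
  cases i with
  | zero => simpa using h0.symm
  | succ j =>
    have h2 := h j (by simp at hi; omega)
    rw [List.getElem_cons_succ, h2]
    congr 1
    omega

theorem blockStart_succ (f : A → List A) (v : ℕ → A) (n : ℕ) :
    blockStart f v (n + 1) = blockStart f v n + (f (v n)).length := rfl

theorem blockStart_strictMono {f : A → List A} {v : ℕ → A}
    (h1 : ∀ a, 0 < (f a).length) : StrictMono (blockStart f v) :=
  strictMono_nat_of_lt_succ fun n => by
    have := h1 (v n); rw [blockStart_succ]; omega

theorem exists_block {f : A → List A} {v : ℕ → A}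
    (h1 : ∀ a, 0 < (f a).length) (m : ℕ) :
    ∃ n, blockStart f v n ≤ m ∧ m < blockStart f v (n + 1) := by
  induction m with
  | zero =>
    refine ⟨0, le_refl _, ?_⟩
    rw [blockStart_succ]
    have := h1 (v 0)
    show 0 < blockStart f v 0 + _
    show 0 < 0 + _
    omega
  | succ m ih =>
    obtain ⟨n, h2, h3⟩ := ih
    rcases lt_or_ge (m + 1) (blockStart f v (n + 1)) with h | h
    · exact ⟨n, by omega, h⟩
    · refine ⟨n + 1, h, ?_⟩
      have := h1 (v (n + 1))
      rw [blockStart_succ (n := n + 1)]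
      omega

/-- The image of a factor is a factor, starting at the corresponding block start,
with the matching length identity. -/
theorem factorAt_image {f : A → List A} (hap : ApplyEq f w u) :
    ∀ (p : List A) (k : ℕ), FactorAt w p k →
      FactorAt u (applyList f p) (blockStart f w k) ∧
        blockStart f w k + (applyList f p).length = blockStart f w (k + p.length) := by
  intro p
  induction p with
  | nil =>
    intro k _
    constructor
    · intro i hi; simp [applyList] at hi
    · simp [applyList]
  | cons a p' ih =>
    intro k h
    obtain ⟨ha, htail⟩ := factorAt_cons' h
    obtain ⟨ih1, ih2⟩ := ih (k + 1) htail
    have hfa : FactorAt u (f a) (blockStart f w k) := by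
      rw [← ha]
      intro i hi
      exact (hap k i hi).symm
    have hlen : blockStart f w k + (f a).length = blockStart f w (k + 1) := by
      rw [blockStart_succ, ha]
    rw [applyList_cons]
    constructor
    · exact factorAt_append_of hfa (by rw [hlen]; exact ih1)
    · rw [List.length_append, List.length_cons,
        show k + (p'.length + 1) = (k + 1) + p'.length by omega, ← ih2, ← hlen]
      omega

theorem Lsub_len_pos (α : A) : ∀ a : A, 0 < (Lsub α a).length := by
  intro a; unfold Lsub; split <;> simp

theorem Rsub_len_pos (β : A) : ∀ a : A, 0 < (Rsub β a).length := by
  intro a; unfold Rsub; split <;> simp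

theorem Lsub_exists_cons (α a : A) : ∃ s, Lsub α a = α :: s := by
  unfold Lsub; split
  · exact ⟨[], rfl⟩
  · exact ⟨[a], rfl⟩

theorem Rsub_exists_cons (β a : A) : ∃ s, Rsub β a = a :: s := by
  unfold Rsub; split
  · rename_i h; exact ⟨[], by rw [h]⟩
  · exact ⟨[β], rfl⟩

theorem L_u_blockStart (hap : ApplyEq (Lsub α) w u) (n : ℕ) :
    u (blockStart (Lsub α) w n) = α := by
  by_cases h' : w n = α <;>
    simpa [Lsub, h'] using hap n 0 (by simp [Lsub, h'])

theorem R_u_blockStart (hap : ApplyEq (Rsub β) w u) (n : ℕ) :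
    u (blockStart (Rsub β) w n) = w n := by
  by_cases h' : w n = β <;>
    simpa [Rsub, h'] using hap n 0 (by simp [Rsub, h'])

/-- In `L_α(w)`, every occurrence of `α` is at a block start. -/
theorem L_alpha_blockStart (hap : ApplyEq (Lsub α) w u) (m : ℕ) (hm : u m = α) :
    ∃ n, m = blockStart (Lsub α) w n := by
  obtain ⟨n, h1, h2⟩ := exists_block (v := w) (Lsub_len_pos α) m
  rcases eq_or_lt_of_le h1 with h | h
  · exact ⟨n, h.symm⟩
  · exfalso
    rw [blockStart_succ] at h2
    by_cases hw : w n = α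
    · rw [show (Lsub α (w n)).length = 1 by simp [Lsub, hw]] at h2; omega
    · have hl2 : (Lsub α (w n)).length = 2 := by simp [Lsub, hw]
      have hm1 : m = blockStart (Lsub α) w n + 1 := by omega
      have h3 := hap n 1 (by omega)
      rw [← hm1, hm] at h3
      simp [Lsub, hw] at h3
      exact hw h3.symm

/-- In `R_β(w)`, every occurrence of a letter `≠ β` is at a block start. -/
theorem R_nonbeta_blockStart (hap : ApplyEq (Rsub β) w u) (m : ℕ) (hm : u m ≠ β) :
    ∃ n, m = blockStart (Rsub β) w n := by
  obtain ⟨n, h1, h2⟩ := exists_block (v := w) (Rsub_len_pos β) m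
  rcases eq_or_lt_of_le h1 with h | h
  · exact ⟨n, h.symm⟩
  · exfalso
    rw [blockStart_succ] at h2
    by_cases hw : w n = β
    · rw [show (Rsub β (w n)).length = 1 by simp [Rsub, hw]] at h2; omega
    · have hl2 : (Rsub β (w n)).length = 2 := by simp [Rsub, hw]
      have hm1 : m = blockStart (Rsub β) w n + 1 := by omega
      have h3 := hap n 1 (by omega)
      rw [← hm1] at h3
      apply hm
      rw [h3]
      simp [Rsub, hw]

theorem Lrest_cons (α : A) (p : List A) :
    ∃ t, applyList (Lsub α) p ++ [α] = α :: t := by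
  cases p with
  | nil => exact ⟨[], by simp [applyList]⟩
  | cons b q =>
    obtain ⟨s, hs⟩ := Lsub_exists_cons α b
    exact ⟨s ++ (applyList (Lsub α) q ++ [α]),
      by rw [applyList_cons, hs]; simp⟩

/-- Decoding an occurrence of the `L_α`-image (with a terminal `α` marker)
starting at a block start. -/
theorem decodeL (hap : ApplyEq (Lsub α) w u) :
    ∀ (p : List A) (k m : ℕ), m = blockStart (Lsub α) w k →
      FactorAt u (applyList (Lsub α) p ++ [α]) m → FactorAt w p k := by
  intro p
  induction p with
  | nil => intro k m _ _ i hi; simp at hi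
  | cons a p' ih =>
    intro k m hm hF
    rw [applyList_cons, List.append_assoc] at hF
    obtain ⟨t, ht⟩ := Lrest_cons α p'
    by_cases hb : a = α
    · -- block of `a` is `[α]`
      have hLa : Lsub α a = [α] := by simp [Lsub, hb]
      rw [hLa, ht] at hF
      have hu1 : u (m + 1) = α := by
        have := hF 1 (by simp)
        simpa using this.symm
      have hwk : w k = α := by
        by_contra hwk
        have h3 := hap k 1 (by simp [Lsub, hwk])
        rw [← hm] at h3
        rw [hu1] at h3
        apply hwk
        rw [show (Lsub α (w k))[1]'(by simp [Lsub, hwk]) = w k by simp [Lsub, hwk]] at h3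
        exact h3.symm
      have hbs : blockStart (Lsub α) w (k + 1) = m + 1 := by
        rw [blockStart_succ, hm]
        simp [Lsub, hwk]
      have htail : FactorAt u (applyList (Lsub α) p' ++ [α]) (m + 1) := by
        rw [ht]
        have := factorAt_cons' hF
        exact this.2
      exact factorAt_cons_of (by rw [hwk, hb]) (ih (k + 1) (m + 1) hbs.symm htail)
    · -- block of `a` is `[α, a]`
      have hLa : Lsub α a = [α, a] := by simp [Lsub, hb]
      rw [hLa, ht] at hF
      -- hF : FactorAt u ([α, a] ++ α :: t) m
      have hu1 : u (m + 1) = a := by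
        have := hF 1 (by simp)
        simpa using this.symm
      have hwk : w k = a := by
        by_contra hwk
        by_cases hwα : w k = α
        · -- next block starts at m+1, so u (m+1) = α, but u (m+1) = a ≠ α
          have hbs : blockStart (Lsub α) w (k + 1) = m + 1 := by
            rw [blockStart_succ, hm]; simp [Lsub, hwα]
          have := L_u_blockStart hap (k + 1)
          rw [hbs, hu1] at this
          exact hb this
        · have h3 := hap k 1 (by simp [Lsub, hwα])
          rw [← hm, hu1] at h3
          apply hwk
          rw [show (Lsub α (w k))[1]'(by simp [Lsub, hwα]) = w k by simp [Lsub, hwα]] at h3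
          exact h3.symm
      have hwα : w k ≠ α := by rw [hwk]; exact hb
      have hbs : blockStart (Lsub α) w (k + 1) = m + 2 := by
        rw [blockStart_succ, hm]
        simp [Lsub, hwα]
      have htail : FactorAt u (applyList (Lsub α) p' ++ [α]) (m + 2) := by
        rw [ht]
        have h4 := factorAt_append_right (x := [α, a]) (y := α :: t) hF
        simpa using h4
      exact factorAt_cons_of hwk (ih (k + 1) (m + 2) hbs.symm htail)

/-- Decoding an occurrence of the `R_β`-image starting at a block start. -/
theorem decodeR (hap : ApplyEq (Rsub β) w u) :
    ∀ (p : List A) (k m : ℕ), m = blockStart (Rsub β) w k →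
      FactorAt u (applyList (Rsub β) p) m → FactorAt w p k := by
  intro p
  induction p with
  | nil => intro k m _ _ i hi; simp [applyList] at hi
  | cons a p' ih =>
    intro k m hm hF
    rw [applyList_cons] at hF
    have hum : u m = w k := by rw [hm]; exact R_u_blockStart hap k
    obtain ⟨s, hs⟩ := Rsub_exists_cons β a
    have hma : u m = a := by
      have hF' := hF
      rw [hs, List.cons_append] at hF'
      exact (factorAt_cons' hF').1
    have hwk : w k = a := by rw [← hum, hma]
    have htail := factorAt_append_right hF
    have hbs : blockStart (Rsub β) w (k + 1) = m + (Rsub β a).length := by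
      rw [blockStart_succ, hm, hwk]
    exact factorAt_cons_of hwk (ih (k + 1) (m + (Rsub β a).length) hbs.symm htail)

end Aux

/-- (1) if `L_α(w)` is recurrent then so is `w`;
(2) if `R_β(αw)` is recurrent (`β ≠ α`) then so is `αw`. -/
theorem stmt16 {A : Type u} [DecidableEq A] [Fintype A] (α β : A) (hαβ : α ≠ β) :
    (∀ w u : ℕ → A, ApplyEq (Lsub α) w u → Recurrent u → Recurrent w) ∧
      ∀ w u : ℕ → A, w 0 = α → ApplyEq (Rsub β) w u → Recurrent u → Recurrent w := by
  constructor
  · -- Part (1): `L_α`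
    intro w u hap hu p k hpk N
    obtain ⟨hU, hlen⟩ := factorAt_image hap p k hpk
    have hα : FactorAt u [α] (blockStart (Lsub α) w k + (applyList (Lsub α) p).length) := by
      rw [hlen]
      intro i hi
      simp only [List.length_singleton, Nat.lt_one_iff] at hi
      subst hi
      simpa using (L_u_blockStart hap (k + p.length)).symm
    have hUα : FactorAt u (applyList (Lsub α) p ++ [α]) (blockStart (Lsub α) w k) :=
      factorAt_append_of hU hα
    obtain ⟨m, hmN, hm⟩ := hu _ _ hUα (blockStart (Lsub α) w N)
    obtain ⟨t, ht⟩ := Lrest_cons α p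
    have hmα : u m = α := by
      have hm' := hm
      rw [ht] at hm'
      exact (factorAt_cons' hm').1
    obtain ⟨k', hk'⟩ := L_alpha_blockStart hap m hmα
    have hk'N : N ≤ k' := by
      by_contra h
      have := blockStart_strictMono (v := w) (Lsub_len_pos α) (by omega : k' < N)
      omega
    exact ⟨k', hk'N, decodeL hap p k' m hk' hm⟩
  · -- Part (2): `R_β`
    intro w u hw0 hap hu p k hpk N
    by_cases hp : p = []
    · exact ⟨N, le_refl _, by subst hp; intro i hi; simp at hi⟩
    have hql : 0 < k + p.length := by
      have : p.length ≠ 0 := by simpa using hp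
      omega
    -- `q` is the prefix of `w` of length `k + p.length`
    set q : List A := List.ofFn (fun i : Fin (k + p.length) => w i) with hq
    have hq0 : FactorAt w q 0 := by
      intro i hi
      simp [hq]
    have hqlen : q.length = k + p.length := by simp [hq]
    obtain ⟨hUq, -⟩ := factorAt_image hap q 0 hq0
    obtain ⟨m, hmN, hm⟩ := hu _ _ hUq (blockStart (Rsub β) w N)
    -- `q` starts with `α`
    obtain ⟨a, q', hqq⟩ := List.exists_cons_of_ne_nil
      (show q ≠ [] by intro h; rw [h] at hqlen; simp at hqlen; omega)
    have haα : a = α := by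
      have h0 := hq0 0 (by rw [hqlen]; omega)
      simp [hqq] at h0
      exact h0.trans hw0
    have hmα : u m = α := by
      have hm' := hm
      rw [hqq, applyList_cons] at hm'
      obtain ⟨s, hs⟩ := Rsub_exists_cons β a
      rw [hs, List.cons_append] at hm'
      rw [(factorAt_cons' hm').1, haα]
    obtain ⟨k', hk'⟩ := R_nonbeta_blockStart hap m (by rw [hmα]; exact hαβ)
    have hk'N : N ≤ k' := by
      by_contra h
      have := blockStart_strictMono (v := w) (Rsub_len_pos β) (by omega : k' < N)
      omega
    have hqk' : FactorAt w q k' := decodeR hap q k' m hk' hm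
    refine ⟨k' + k, by omega, ?_⟩
    intro i hi
    have h1 := hpk i hi
    have h2 := hq0 (k + i) (by omega)
    have h3 := hqk' (k + i) (by omega)
    have h4 : w (k + i) = w (k' + (k + i)) := by
      rw [← h3]
      simpa using h2.symm
    rw [h1, h4]
    congr 1
    omega
end

section
/- Let f be a nonerasing endomorphism of A* (A an alphabet with at least two letters) that preserves episturmian words, and suppose g is a nonerasing endomorphism with f = L_α ∘ g or f = R_α ∘ g for some letter α. Then g preserves episturmian words as well (and conversely, if g preserves episturmian words then so does f). -/
universe u
variable {A : Type u}

variable [DecidableEq A]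

/-- `u` is a left special factor of `w`. -/
def LeftSpecial (w : ℕ → A) (u : List A) : Prop :=
  ∃ α β : A, α ≠ β ∧ Factor w (α :: u) ∧ Factor w (β :: u)

/-- An infinite word is episturmian: its factors are closed under reversal and it
has at most one left special factor of each length. -/
def Episturmian (w : ℕ → A) : Prop :=
  (∀ u : List A, Factor w u → Factor w u.reverse) ∧
    ∀ u v : List A, LeftSpecial w u → LeftSpecial w v → u.length = v.length → u = v

/-- `f` preserves episturmian words. -/
def PreservesEpi (f : A → List A) : Prop :=
  ∀ v u : ℕ → A, Episturmian v → ApplyEq f v u → Episturmian u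

/-- Composition of two substitutions: `(comp2 f g)(a) = f(g(a))`. -/
def comp2 (f g : A → List A) : A → List A := fun a => applyList f (g a)

namespace Stmt19

variable {A : Type u}

/-- segment of an infinite word -/
def seg (w : ℕ → A) (p n : ℕ) : List A := List.ofFn (fun i : Fin n => w (p + i))

@[simp] lemma length_seg (w : ℕ → A) (p n : ℕ) : (seg w p n).length = n := by
  simp [seg]

lemma getElem_seg (w : ℕ → A) (p n i : ℕ) (h : i < n) :
    (seg w p n)[i]'(by simpa) = w (p + i) := by
  simp [seg]

lemma seg_add (w : ℕ → A) (p a b : ℕ) :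
    seg w p (a + b) = seg w p a ++ seg w (p + a) b := by
  apply List.ext_getElem (by simp)
  intro i h1 h2
  simp only [length_seg] at h1
  rcases lt_or_ge i a with h | h
  · rw [List.getElem_append_left (by simpa), getElem_seg _ _ _ _ (by omega),
      getElem_seg _ _ _ _ h]
  · rw [List.getElem_append_right (by simpa), getElem_seg _ _ _ _ h1]
    have : i - (seg w p a).length < b := by simp; omega
    rw [getElem_seg _ _ _ _ this]
    simp only [length_seg]
    congr 1
    omega

lemma factorAt_nil (w : ℕ → A) (k : ℕ) : FactorAt w [] k := by
  intro i h; simp at h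

lemma factorAt_seg (w : ℕ → A) (p n : ℕ) : FactorAt w (seg w p n) p := by
  intro i h
  rw [getElem_seg _ _ _ _ (by simpa using h)]

lemma seg_eq_of_factorAt {w : ℕ → A} {z : List A} {p : ℕ} (h : FactorAt w z p) :
    z = seg w p z.length := by
  apply List.ext_getElem (by simp)
  intro i h1 h2
  rw [getElem_seg _ _ _ _ (by simpa using h1), h i h1]

lemma factorAt_append {w : ℕ → A} {l l' : List A} {k : ℕ}
    (h1 : FactorAt w l k) (h2 : FactorAt w l' (k + l.length)) :
    FactorAt w (l ++ l') k := by
  intro i h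
  rcases lt_or_ge i l.length with hi | hi
  · rw [List.getElem_append_left hi, h1 i hi]
  · rw [List.getElem_append_right hi, h2 (i - l.length) (by simp at h; omega)]
    congr 1
    omega

lemma factorAt_cons {w : ℕ → A} {a : A} {l : List A} {k : ℕ}
    (h1 : w k = a) (h2 : FactorAt w l (k + 1)) : FactorAt w (a :: l) k := by
  intro i h
  cases i with
  | zero => simpa using h1.symm
  | succ i =>
      simp only [List.getElem_cons_succ]
      rw [h2 i (by simpa using h)]
      congr 1
      omega

lemma factorAt_cons_elim {w : ℕ → A} {a : A} {l : List A} {k : ℕ}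
    (h : FactorAt w (a :: l) k) : w k = a ∧ FactorAt w l (k + 1) := by
  constructor
  · have := h 0 (by simp)
    simpa using this.symm
  · intro i hi
    have := h (i + 1) (by simpa using hi)
    simpa [Nat.add_assoc, Nat.add_comm 1 i] using this

lemma factorAt_take {w : ℕ → A} {l : List A} {k : ℕ} (h : FactorAt w l k) (n : ℕ) :
    FactorAt w (l.take n) k := by
  intro i hi
  have hi' : i < l.length := lt_of_lt_of_le hi (by rw [List.length_take]; omega)
  rw [List.getElem_take, h i hi']

lemma factorAt_drop {w : ℕ → A} {l : List A} {k : ℕ} (h : FactorAt w l k) (n : ℕ) :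
    FactorAt w (l.drop n) (k + n) := by
  intro i hi
  have hi' : n + i < l.length := by simp at hi; omega
  rw [List.getElem_drop, h (n + i) hi']
  congr 1
  omega

lemma prefix_factorAt {w : ℕ → A} {x y : List A} {k : ℕ} (h : FactorAt w x k)
    (hp : y <+: x) : FactorAt w y k := by
  obtain ⟨t, rfl⟩ := hp
  have := factorAt_take h y.length
  simpa using this

lemma factorAt_prefix_of {w : ℕ → A} {z Z : List A} {p : ℕ} (h1 : FactorAt w z p)
    (h2 : FactorAt w Z p) (hl : z.length ≤ Z.length) : z <+: Z := by
  refine ⟨Z.drop z.length, ?_⟩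
  suffices hzz : z = Z.take z.length by
    nth_rewrite 1 [hzz]
    exact List.take_append_drop _ _
  apply List.ext_getElem (by rw [List.length_take]; omega)
  intro i hi1 hi2
  rw [List.getElem_take, h1 i hi1, h2 i (by omega)]

lemma infix_factor {w : ℕ → A} {x y : List A} {k : ℕ} (h : FactorAt w x k)
    (hp : y <:+: x) : Factor w y := by
  obtain ⟨s, t, rfl⟩ := hp
  refine ⟨k + s.length, ?_⟩
  have h1 := factorAt_drop h s.length
  rw [List.append_assoc, List.drop_left] at h1
  exact prefix_factorAt h1 ⟨t, rfl⟩

lemma seg_infix_seg {w : ℕ → A} {q p n m : ℕ} (h1 : q ≤ p) (h2 : p + n ≤ q + m) :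
    seg w p n <:+: seg w q m := by
  have hm : m = (p - q) + (n + (m - (p - q) - n)) := by omega
  rw [hm, seg_add, seg_add]
  have hpq : q + (p - q) = p := by omega
  rw [hpq]
  exact ⟨seg w q (p - q), seg w (p + n) (m - (p - q) - n), List.append_assoc _ _ _⟩


section Subst

variable {σ : A → List A} {v w w' : ℕ → A}

lemma blockStart_succ (σ : A → List A) (v : ℕ → A) (n : ℕ) :
    blockStart σ v (n + 1) = blockStart σ v n + (σ (v n)).length := rfl

@[simp] lemma blockStart_zero (σ : A → List A) (v : ℕ → A) :
    blockStart σ v 0 = 0 := rfl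

lemma applyList_nil (σ : A → List A) : applyList σ [] = [] := rfl

lemma applyList_cons (σ : A → List A) (a : A) (l : List A) :
    applyList σ (a :: l) = σ a ++ applyList σ l := by simp [applyList]

lemma applyList_append (σ : A → List A) (l l' : List A) :
    applyList σ (l ++ l') = applyList σ l ++ applyList σ l' := by simp [applyList]

lemma applyList_singleton (σ : A → List A) (a : A) :
    applyList σ [a] = σ a := by simp [applyList]

lemma seg_zero (w : ℕ → A) (p : ℕ) : seg w p 0 = [] := rfl

lemma seg_one (w : ℕ → A) (q : ℕ) : seg w q 1 = [w q] := by
  simp [seg, List.ofFn_succ]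

lemma seg_succ (w : ℕ → A) (p n : ℕ) : seg w p (n + 1) = seg w p n ++ [w (p + n)] := by
  rw [seg_add, seg_one]

lemma blockStart_add_applyList (σ : A → List A) (v : ℕ → A) (n m : ℕ) :
    blockStart σ v (n + m) = blockStart σ v n + (applyList σ (seg v n m)).length := by
  induction m with
  | zero => simp [seg_zero, applyList_nil]
  | succ m ih =>
      rw [show n + (m + 1) = (n + m) + 1 by omega, blockStart_succ, ih, seg_succ,
        applyList_append, applyList_singleton]
      simp [Nat.add_assoc]

lemma length_applyList_seg (σ : A → List A) (v : ℕ → A) (m : ℕ) :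
    (applyList σ (seg v 0 m)).length = blockStart σ v m := by
  have := blockStart_add_applyList σ v 0 m
  simpa using this.symm

lemma blockStart_add_le (hσ : ∀ a, σ a ≠ []) (n m : ℕ) :
    blockStart σ v n + m ≤ blockStart σ v (n + m) := by
  induction m with
  | zero => simp
  | succ m ih =>
      have hp : 0 < (σ (v (n + m))).length := List.length_pos_iff.2 (hσ _)
      rw [show n + (m + 1) = (n + m) + 1 by omega, blockStart_succ]
      omega

lemma le_blockStart (hσ : ∀ a, σ a ≠ []) (n : ℕ) : n ≤ blockStart σ v n := by
  have := blockStart_add_le (v := v) hσ 0 n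
  simpa using this

lemma blockStart_lt (hσ : ∀ a, σ a ≠ []) {n k : ℕ} (h : n < k) :
    blockStart σ v n < blockStart σ v k := by
  have h1 := blockStart_add_le (v := v) hσ n (k - n)
  rw [show n + (k - n) = k by omega] at h1
  omega

lemma exists_block_index (hσ : ∀ a, σ a ≠ []) (p : ℕ) :
    ∃ n i, i < (σ (v n)).length ∧ p = blockStart σ v n + i := by
  induction p with
  | zero => exact ⟨0, 0, List.length_pos_iff.2 (hσ _), by simp⟩
  | succ p ih =>
      obtain ⟨n, i, hi, rfl⟩ := ih
      rcases lt_or_ge (i + 1) (σ (v n)).length with h | h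
      · exact ⟨n, i + 1, h, by omega⟩
      · refine ⟨n + 1, 0, List.length_pos_iff.2 (hσ _), ?_⟩
        rw [blockStart_succ]
        omega

lemma applyEq_factorAt (hu : ApplyEq σ v w) {x : List A} {k : ℕ} (hx : FactorAt v x k) :
    FactorAt w (applyList σ x) (blockStart σ v k) := by
  induction x generalizing k with
  | nil => exact (applyList_nil σ) ▸ factorAt_nil w _
  | cons a s ih =>
      obtain ⟨h1, h2⟩ := factorAt_cons_elim hx
      subst h1
      rw [applyList_cons]
      apply factorAt_append
      · intro i hi
        exact (hu k i hi).symm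
      · rw [← blockStart_succ]
        exact ih h2

lemma applyEq_pointwise_unique (hσ : ∀ a, σ a ≠ []) (h1 : ApplyEq σ v w)
    (h2 : ApplyEq σ v w') : ∀ p, w p = w' p := by
  intro p
  obtain ⟨n, i, hi, rfl⟩ := exists_block_index (v := v) hσ p
  rw [h1 n i hi, h2 n i hi]

/-- canonical image word -/
def imageWord (σ : A → List A) (v : ℕ → A) : ℕ → A :=
  fun p => (applyList σ (seg v 0 (p + 1))).getD p (v 0)

lemma applyEq_imageWord (hσ : ∀ a, σ a ≠ []) (v : ℕ → A) :
    ApplyEq σ v (imageWord σ v) := by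
  intro n i hi
  have hnp : n ≤ blockStart σ v n := le_blockStart hσ n
  set p := blockStart σ v n + i with hp
  have e1 : p + 1 = n + (1 + (p - n)) := by omega
  rw [imageWord]
  rw [e1, seg_add, seg_add, seg_one, applyList_append, applyList_append, applyList_singleton]
  simp only [Nat.zero_add]
  have hlen : (applyList σ (seg v 0 n)).length = blockStart σ v n :=
    length_applyList_seg σ v n
  have htot : p < ((applyList σ (seg v 0 n)) ++ (σ (v n) ++ applyList σ (seg v (n + 1) (p - n)))).length := by
    simp only [List.length_append]
    omega
  rw [List.getD_eq_getElem _ _ htot,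
    List.getElem_append_right (by omega),
    List.getElem_append_left (by rw [hlen]; omega)]
  congr 1
  omega

end Subst

section Subst2

variable {σ τ g : A → List A} {v w u : ℕ → A}

lemma cover (hσ : ∀ a, σ a ≠ []) (hu : ApplyEq σ v w) {z : List A} {p : ℕ}
    (hz : FactorAt w z p) :
    ∃ n₀ d, FactorAt v (seg v n₀ (d + z.length)) n₀ ∧
      p = blockStart σ v n₀ + d ∧
      z <:+: applyList σ (seg v n₀ (d + z.length)) := by
  obtain ⟨n₀, d, hd, rfl⟩ := exists_block_index (v := v) hσ p
  refine ⟨n₀, d, factorAt_seg v n₀ _, rfl, ?_⟩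
  have hX : FactorAt w (applyList σ (seg v n₀ (d + z.length))) (blockStart σ v n₀) :=
    applyEq_factorAt hu (factorAt_seg v n₀ _)
  have hXlen : blockStart σ v n₀ + (applyList σ (seg v n₀ (d + z.length))).length
      = blockStart σ v (n₀ + (d + z.length)) := by
    rw [blockStart_add_applyList]
  have hle := blockStart_add_le (v := v) hσ n₀ (d + z.length)
  nth_rewrite 1 [seg_eq_of_factorAt hz]
  rw [seg_eq_of_factorAt hX]
  apply seg_infix_seg (by omega)
  omega

lemma recur_transfer (hσ : ∀ a, σ a ≠ []) (hu : ApplyEq σ v w)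
    (hv : ∀ x k, FactorAt v x k → ∀ N, ∃ m, N ≤ m ∧ FactorAt v x m) :
    ∀ z p, FactorAt w z p → ∀ N, ∃ m, N ≤ m ∧ FactorAt w z m := by
  intro z p hz N
  obtain ⟨n₀, d, hxv, hp, hinf⟩ := cover hσ hu hz
  obtain ⟨k, hk, hxk⟩ := hv _ _ hxv N
  have hX := applyEq_factorAt hu hxk
  obtain ⟨s, t, hst⟩ := hinf
  refine ⟨blockStart σ v k + s.length, ?_, ?_⟩
  · have := le_blockStart (v := v) hσ k
    omega
  · rw [← hst] at hX
    have h1 := factorAt_drop hX s.length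
    rw [List.append_assoc, List.drop_left] at h1
    exact prefix_factorAt h1 ⟨t, rfl⟩

lemma recurrent_of_revclosed {w : ℕ → A}
    (hc : ∀ x, Factor w x → Factor w x.reverse) :
    ∀ z k, FactorAt w z k → ∀ N, ∃ m, N ≤ m ∧ FactorAt w z m := by
  have step1 : ∀ n N, ∃ m, N ≤ m ∧ FactorAt w (seg w 0 n).reverse m := by
    intro n N
    obtain ⟨m₀, hm₀⟩ := hc (seg w 0 (n + N)) ⟨0, factorAt_seg w 0 _⟩
    refine ⟨m₀ + N, by omega, ?_⟩
    have hq : seg w 0 (n + N) = seg w 0 n ++ seg w n N := by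
      rw [seg_add]
      simp
    rw [hq, List.reverse_append] at hm₀
    have h1 := factorAt_drop hm₀ (seg w n N).reverse.length
    rw [List.drop_left] at h1
    simpa using h1
  have step2 : ∀ z k, FactorAt w z k → ∀ N, ∃ m, N ≤ m ∧ FactorAt w z.reverse m := by
    intro z k hz N
    obtain ⟨m, hm, hfm⟩ := step1 (k + z.length) N
    refine ⟨m, hm, ?_⟩
    have hP : seg w 0 (k + z.length) = seg w 0 k ++ z := by
      rw [seg_add]
      simp [← seg_eq_of_factorAt hz]
    rw [hP, List.reverse_append] at hfm
    exact prefix_factorAt hfm ⟨(seg w 0 k).reverse, rfl⟩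
  intro z k hz N
  obtain ⟨k', hk'⟩ := hc z ⟨k, hz⟩
  obtain ⟨m, hm, hfm⟩ := step2 z.reverse k' hk' N
  rw [List.reverse_reverse] at hfm
  exact ⟨m, hm, hfm⟩

lemma leftSpecial_congr {w₁ w₂ : ℕ → A} (h : ∀ z, Factor w₁ z → Factor w₂ z)
    {t : List A} (ht : LeftSpecial w₁ t) : LeftSpecial w₂ t := by
  obtain ⟨a, b, hab, h1, h2⟩ := ht
  exact ⟨a, b, hab, h _ h1, h _ h2⟩

lemma epi_congr {w₁ w₂ : ℕ → A} (h : ∀ z, Factor w₁ z ↔ Factor w₂ z)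
    (he : Episturmian w₁) : Episturmian w₂ := by
  obtain ⟨h1, h2⟩ := he
  constructor
  · intro x hx
    exact (h _).1 (h1 x ((h x).2 hx))
  · intro x y hx hy hl
    exact h2 x y (leftSpecial_congr (fun z => (h z).2) hx)
      (leftSpecial_congr (fun z => (h z).2) hy) hl

lemma leftSpecial_take {t : List A} (h : LeftSpecial w t) (n : ℕ) :
    LeftSpecial w (t.take n) := by
  obtain ⟨a, b, hab, ⟨k1, h1⟩, ⟨k2, h2⟩⟩ := h
  refine ⟨a, b, hab, ⟨k1, ?_⟩, ⟨k2, ?_⟩⟩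
  · have := factorAt_take h1 (n + 1)
    simpa using this
  · have := factorAt_take h2 (n + 1)
    simpa using this

lemma leftSpecial_prefix {s t : List A} (h : LeftSpecial w t) (hp : s <+: t) :
    LeftSpecial w s := by
  obtain ⟨r, rfl⟩ := hp
  have := leftSpecial_take h s.length
  simpa using this

lemma ls_chain (he : Episturmian w) {s t : List A} (h1 : LeftSpecial w s)
    (h2 : LeftSpecial w t) : s <+: t ∨ t <+: s := by
  rcases le_total s.length t.length with h | h
  · left
    have h3 := leftSpecial_take h2 s.length
    have h4 := he.2 s (t.take s.length) h1 h3 (by simp; omega)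
    rw [h4]
    exact List.take_prefix _ _
  · right
    have h3 := leftSpecial_take h1 t.length
    have h4 := he.2 t (s.take t.length) h2 h3 (by simp; omega)
    rw [h4]
    exact List.take_prefix _ _

lemma comp2_ne (hτ : ∀ a, τ a ≠ []) (hg : ∀ a, g a ≠ []) : ∀ a, comp2 τ g a ≠ [] := by
  intro a
  cases hga : g a with
  | nil => exact absurd hga (hg a)
  | cons b l =>
      show applyList τ (g a) ≠ []
      rw [hga, applyList_cons]
      intro hh
      exact hτ b (List.append_eq_nil_iff.1 hh).1

lemma getElem_applyList (τ : A → List A) (l : List A) (i : ℕ)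
    (hi : i < (applyList τ l).length) :
    ∃ j, ∃ (hj : j < l.length), ∃ i', ∃ (hi' : i' < (τ l[j]).length),
      i = (applyList τ (l.take j)).length + i' ∧ (applyList τ l)[i] = (τ l[j])[i'] := by
  induction l generalizing i with
  | nil => simp [applyList_nil] at hi
  | cons a l ih =>
      rw [applyList_cons] at hi
      rcases lt_or_ge i (τ a).length with h | h
      · refine ⟨0, by simp, i, by simpa using h, by simp [applyList_nil], ?_⟩
        simp only [applyList_cons, List.getElem_cons_zero]
        exact List.getElem_append_left h
      · have hi2 : i - (τ a).length < (applyList τ l).length := by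
          simp only [List.length_append] at hi
          omega
        obtain ⟨j, hj, i', hi', he, hval⟩ := ih _ hi2
        refine ⟨j + 1, by simpa using hj, i', by simpa using hi', ?_, ?_⟩
        · rw [List.take_succ_cons, applyList_cons, List.length_append]
          omega
        · simp only [applyList_cons, List.getElem_cons_succ]
          rw [List.getElem_append_right h]
          exact hval

lemma blockStart_comp (hg : ApplyEq g v w) (n : ℕ) :
    blockStart (comp2 τ g) v n = blockStart τ w (blockStart g v n) := by
  induction n with
  | zero => simp
  | succ n ih =>
      have hfa : FactorAt w (g (v n)) (blockStart g v n) := by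
        intro i hi
        exact (hg n i hi).symm
      have hseg : seg w (blockStart g v n) (g (v n)).length = g (v n) :=
        (seg_eq_of_factorAt hfa).symm
      rw [blockStart_succ, blockStart_succ, ih,
        blockStart_add_applyList τ w (blockStart g v n) (g (v n)).length, hseg]
      rfl

lemma applyEq_comp (hτ : ∀ a, τ a ≠ []) (hg : ApplyEq g v w) (hu : ApplyEq τ w u) :
    ApplyEq (comp2 τ g) v u := by
  intro n i hi
  have hi2 : i < (applyList τ (g (v n))).length := hi
  obtain ⟨j, hj, i', hi', he, hval⟩ := getElem_applyList τ (g (v n)) i hi2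
  have hgj : w (blockStart g v n + j) = (g (v n))[j] := hg n j hj
  have hfa : FactorAt w (g (v n)) (blockStart g v n) := fun t ht => (hg n t ht).symm
  have htake : (g (v n)).take j = seg w (blockStart g v n) j := by
    have h2 := seg_eq_of_factorAt (factorAt_take hfa j)
    rwa [List.length_take, Nat.min_eq_left (le_of_lt hj)] at h2
  have hlen : blockStart τ w (blockStart g v n + j)
      = blockStart τ w (blockStart g v n) + (applyList τ ((g (v n)).take j)).length := by
    rw [htake, blockStart_add_applyList]
  have hpos : blockStart (comp2 τ g) v n + i
      = blockStart τ w (blockStart g v n + j) + i' := by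
    rw [blockStart_comp hg, he]
    omega
  rw [hpos]
  have h5 : (comp2 τ g (v n))[i]'hi = (τ ((g (v n))[j]))[i']'hi' := hval
  rw [h5]
  simp only [← hgj]
  exact hu (blockStart g v n + j) i' (by rw [hgj]; exact hi')

lemma applyEq_comp_rev (hτ : ∀ a, τ a ≠ []) (hgne : ∀ a, g a ≠ [])
    (hgv : ApplyEq g v w) (hc : ApplyEq (comp2 τ g) v u) : ApplyEq τ w u := by
  have h1 : ApplyEq τ w (imageWord τ w) := applyEq_imageWord hτ w
  have h2 : ApplyEq (comp2 τ g) v (imageWord τ w) := applyEq_comp hτ hgv h1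
  have h3 := applyEq_pointwise_unique (comp2_ne hτ hgne) hc h2
  intro n i hi
  rw [h3, h1 n i hi]

end Subst2

section Lsec

variable [DecidableEq A] {α : A} {w u : ℕ → A}

lemma lsub_ne (α : A) : ∀ a, Lsub α a ≠ [] := by
  intro a
  unfold Lsub
  split <;> simp

lemma rsub_ne (α : A) : ∀ a, Rsub α a ≠ [] := by
  intro a
  unfold Rsub
  split <;> simp

lemma lsub_self (α : A) : Lsub α α = [α] := by simp [Lsub]

lemma lsub_of_ne {a : A} (h : a ≠ α) : Lsub α a = [α, a] := by simp [Lsub, h]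

lemma rsub_self (α : A) : Rsub α α = [α] := by simp [Rsub]

lemma rsub_of_ne {a : A} (h : a ≠ α) : Rsub α a = [a, α] := by simp [Rsub, h]

lemma lsub_eq_cons (α a : A) : Lsub α a = α :: (if a = α then [] else [a]) := by
  by_cases h : a = α
  · simp [h, lsub_self]
  · simp [h, lsub_of_ne h]

/-- `L(x) ++ [α]` always starts with `α`. -/
lemma L_cons (α : A) (x : List A) :
    ∃ l, applyList (Lsub α) x ++ [α] = α :: l := by
  cases x with
  | nil => exact ⟨[], rfl⟩
  | cons a s =>
      rw [applyList_cons, lsub_eq_cons]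
      exact ⟨(if a = α then [] else [a]) ++ (applyList (Lsub α) s ++ [α]), by simp⟩

/-- reversal identity: `α :: reverse (L x) = L (reverse x) ++ [α]`. -/
lemma L_rev (α : A) (x : List A) :
    α :: (applyList (Lsub α) x).reverse = applyList (Lsub α) x.reverse ++ [α] := by
  induction x with
  | nil => simp [applyList_nil]
  | cons a s ih =>
      have hb : [α] ++ (Lsub α a).reverse = Lsub α a ++ [α] := by
        by_cases h : a = α
        · simp [h, lsub_self]
        · simp [lsub_of_ne h]
      calc α :: (applyList (Lsub α) (a :: s)).reverse
          = (α :: (applyList (Lsub α) s).reverse) ++ (Lsub α a).reverse := by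
            rw [applyList_cons, List.reverse_append, ← List.cons_append]
        _ = (applyList (Lsub α) s.reverse ++ [α]) ++ (Lsub α a).reverse := by rw [ih]
        _ = applyList (Lsub α) s.reverse ++ ([α] ++ (Lsub α a).reverse) := by
            rw [List.append_assoc]
        _ = applyList (Lsub α) s.reverse ++ (Lsub α a ++ [α]) := by rw [hb]
        _ = applyList (Lsub α) (a :: s).reverse ++ [α] := by
            rw [List.reverse_cons, applyList_append, applyList_singleton,
              List.append_assoc]

/-- `L(x) ++ [α] = α :: R(x)`. -/
lemma LR_id (α : A) (x : List A) :
    applyList (Lsub α) x ++ [α] = α :: applyList (Rsub α) x := by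
  induction x with
  | nil => simp [applyList_nil]
  | cons a s ih =>
      rw [applyList_cons, applyList_cons]
      by_cases h : a = α
      · subst h
        rw [lsub_self, rsub_self]
        simpa using ih
      · rw [lsub_of_ne h, rsub_of_ne h]
        simp only [List.cons_append, List.append_assoc]
        rw [ih]
        simp

lemma L_snoc (α : A) (t : List A) :
    applyList (Lsub α) (t ++ [α]) = applyList (Lsub α) t ++ [α] := by
  rw [applyList_append, applyList_singleton, lsub_self]

lemma count_L (α : A) (t : List A) :
    (applyList (Lsub α) t).count α = t.length := by
  induction t with
  | nil => simp [applyList_nil]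
  | cons a s ih =>
      rw [applyList_cons, List.count_append, ih]
      by_cases h : a = α
      · simp [h, lsub_self]
        omega
      · simp [lsub_of_ne h, List.count_cons, h]
        omega

/-- head of `L s ++ [α]` is `α`. -/
lemma L_head (α : A) (s : List A) (h : 0 < (applyList (Lsub α) s ++ [α]).length) :
    (applyList (Lsub α) s ++ [α])[0] = α := by
  obtain ⟨l, hl⟩ := L_cons α s
  simp [hl]

lemma L_len_ge (α : A) (a : A) (s : List A) :
    2 ≤ (applyList (Lsub α) (a :: s) ++ [α]).length := by
  rw [applyList_cons]
  have := List.length_pos_iff.2 (lsub_ne α a)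
  simp only [List.length_append, List.length_singleton]
  omega

lemma L_getElem_one (α : A) (a : A) (s : List A)
    (h : 1 < (applyList (Lsub α) (a :: s) ++ [α]).length) :
    (applyList (Lsub α) (a :: s) ++ [α])[1] = if a = α then α else a := by
  by_cases hh : a = α
  · subst hh
    simp only [if_pos rfl]
    have he : applyList (Lsub a) (a :: s) ++ [a]
        = a :: (applyList (Lsub a) s ++ [a]) := by
      rw [applyList_cons, lsub_self]
      simp
    simp only [he, List.getElem_cons_succ]
    exact L_head a s (by simp)
  · simp only [if_neg hh]
    have he : applyList (Lsub α) (a :: s) ++ [α]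
        = α :: a :: (applyList (Lsub α) s ++ [α]) := by
      rw [applyList_cons, lsub_of_ne hh]
      simp
    simp [he]

lemma L_prefix_eq (α : A) : ∀ (t t' : List A),
    applyList (Lsub α) t ++ [α] <+: applyList (Lsub α) t' ++ [α] →
    t.length = t'.length → t = t' := by
  intro t
  induction t with
  | nil =>
      intro t' _ hl
      cases t' with
      | nil => rfl
      | cons a s => simp at hl
  | cons a s ih =>
      intro t' hp hl
      cases t' with
      | nil => simp at hl
      | cons a' s' =>
          have h2 : 1 < (applyList (Lsub α) (a :: s) ++ [α]).length := L_len_ge α a s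
          have h2' : 1 < (applyList (Lsub α) (a' :: s') ++ [α]).length := L_len_ge α a' s'
          have hel := hp.getElem h2
          rw [L_getElem_one α a s h2, L_getElem_one α a' s' h2'] at hel
          have key : a = a' := by
            by_cases ha : a = α <;> by_cases ha' : a' = α
            · rw [ha, ha']
            · rw [if_pos ha, if_neg ha'] at hel
              exact absurd hel.symm ha'
            · rw [if_neg ha, if_pos ha'] at hel
              exact absurd hel ha
            · rwa [if_neg ha, if_neg ha'] at hel
          subst key
          rw [applyList_cons, applyList_cons, List.append_assoc, List.append_assoc] at hp
          have hp2 : applyList (Lsub α) s ++ [α] <+: applyList (Lsub α) s' ++ [α] :=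
            (List.prefix_append_right_inj (Lsub α a)).1 hp
          rw [ih s' hp2 (by simpa using hl)]

lemma L_inj (α : A) {t t' : List A} (h : applyList (Lsub α) t = applyList (Lsub α) t') :
    t = t' := by
  have hl : t.length = t'.length := by
    rw [← count_L α t, ← count_L α t', h]
  exact L_prefix_eq α t t' (by rw [h]) hl

lemma L_combine (α : A) {t t' : List A} {r r' : ℕ} (hr : r ≤ 1) (hr' : r' ≤ 1)
    (h : applyList (Lsub α) t ++ List.replicate r α
       = applyList (Lsub α) t' ++ List.replicate r' α) :
    (r = r' ∧ t = t') ∨ (r = 1 ∧ r' = 0 ∧ t' = t ++ [α]) ∨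
      (r' = 1 ∧ r = 0 ∧ t = t' ++ [α]) := by
  interval_cases r <;> interval_cases r'
  · simp only [List.replicate_zero, List.append_nil] at h
    exact Or.inl ⟨rfl, L_inj α h⟩
  · simp only [List.replicate_zero, List.append_nil, List.replicate_one] at h
    refine Or.inr (Or.inr ⟨rfl, rfl, ?_⟩)
    apply L_inj α
    rw [L_snoc, ← h]
  · simp only [List.replicate_zero, List.append_nil, List.replicate_one] at h
    refine Or.inr (Or.inl ⟨rfl, rfl, ?_⟩)
    apply L_inj α
    rw [L_snoc, h]
  · simp only [List.replicate_one] at h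
    have := List.append_cancel_right h
    exact Or.inl ⟨rfl, L_inj α this⟩

end Lsec

section LW

variable [DecidableEq A] {α : A} {w u : ℕ → A}

lemma lsub_len (α a : A) : (Lsub α a).length = if a = α then 1 else 2 := by
  by_cases h : a = α <;> simp [h, lsub_self, lsub_of_ne]

lemma u_bS (hu : ApplyEq (Lsub α) w u) (n : ℕ) : u (blockStart (Lsub α) w n) = α := by
  have h0 : 0 < (Lsub α (w n)).length := List.length_pos_iff.2 (lsub_ne α _)
  have h1 := hu n 0 h0
  rw [Nat.add_zero] at h1
  rw [h1]
  simp [lsub_eq_cons]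

lemma u_bS1 (hu : ApplyEq (Lsub α) w u) (n : ℕ) (h : w n ≠ α) :
    u (blockStart (Lsub α) w n + 1) = w n := by
  have hlen : (Lsub α (w n)).length = 2 := by rw [lsub_len]; simp [h]
  have h1 := hu n 1 (by omega)
  rw [h1]
  simp [lsub_of_ne h]

lemma bS_succ_alpha (n : ℕ) (h : w n = α) :
    blockStart (Lsub α) w (n + 1) = blockStart (Lsub α) w n + 1 := by
  rw [blockStart_succ, lsub_len]
  simp [h]

lemma bS_succ_not (n : ℕ) (h : w n ≠ α) :
    blockStart (Lsub α) w (n + 1) = blockStart (Lsub α) w n + 2 := by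
  rw [blockStart_succ, lsub_len]
  simp [h]

lemma classifyL (w : ℕ → A) (p : ℕ) : ∃ n, p = blockStart (Lsub α) w n ∨
    (w n ≠ α ∧ p = blockStart (Lsub α) w n + 1) := by
  obtain ⟨n, i, hi, rfl⟩ := exists_block_index (v := w) (lsub_ne α) p
  refine ⟨n, ?_⟩
  rw [lsub_len] at hi
  by_cases h : w n = α
  · rw [if_pos h] at hi
    left
    omega
  · rw [if_neg h] at hi
    interval_cases i
    · left; rfl
    · right; exact ⟨h, rfl⟩

lemma alpha_pos (hu : ApplyEq (Lsub α) w u) {p : ℕ} (h : u p = α) :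
    ∃ n, p = blockStart (Lsub α) w n := by
  obtain ⟨n, hn | ⟨hw, hn⟩⟩ := classifyL w p
  · exact ⟨n, hn⟩
  · exfalso
    subst hn
    rw [u_bS1 hu n hw] at h
    exact hw h

lemma last_char (hu : ApplyEq (Lsub α) w u) (n : ℕ) :
    u (blockStart (Lsub α) w (n + 1) - 1) = w n := by
  by_cases h : w n = α
  · rw [bS_succ_alpha n h, Nat.add_sub_cancel, u_bS hu, h]
  · rw [bS_succ_not n h, show blockStart (Lsub α) w n + 2 - 1
      = blockStart (Lsub α) w n + 1 by omega, u_bS1 hu n h]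

lemma Limage (hu : ApplyEq (Lsub α) w u) {x : List A} {k : ℕ} (hx : FactorAt w x k) :
    FactorAt u (applyList (Lsub α) x ++ [α]) (blockStart (Lsub α) w k) := by
  apply factorAt_append (applyEq_factorAt hu hx)
  have hxseg : x = seg w k x.length := seg_eq_of_factorAt hx
  have hlen : blockStart (Lsub α) w k + (applyList (Lsub α) x).length
      = blockStart (Lsub α) w (k + x.length) := by
    rw [blockStart_add_applyList (Lsub α) w k x.length, ← hxseg]
  rw [hlen]
  exact factorAt_cons (u_bS hu _) (factorAt_nil u _)

lemma desubL_aligned (hu : ApplyEq (Lsub α) w u) : ∀ (y : List A) (m : ℕ),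
    FactorAt u (applyList (Lsub α) y ++ [α]) (blockStart (Lsub α) w m) →
    FactorAt w y m := by
  intro y
  induction y with
  | nil => intro m _; exact factorAt_nil w m
  | cons a s ih =>
      intro m hf
      by_cases h : a = α
      · have he : applyList (Lsub α) (a :: s) ++ [α]
            = α :: (applyList (Lsub α) s ++ [α]) := by
          rw [applyList_cons, h, lsub_self]
          simp
        rw [he] at hf
        obtain ⟨h1, h2⟩ := factorAt_cons_elim hf
        have hwm : w m = α := by
          by_contra hw
          have h3 : u (blockStart (Lsub α) w m + 1) = α := by
            have h4 := h2 0 (by simp)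
            rw [L_head α s (by simp)] at h4
            simpa using h4.symm
          rw [u_bS1 hu m hw] at h3
          exact hw h3
        have hb : blockStart (Lsub α) w (m + 1) = blockStart (Lsub α) w m + 1 :=
          bS_succ_alpha m hwm
        exact factorAt_cons (by rw [hwm, h]) (ih (m + 1) (by rw [hb]; exact h2))
      · have he : applyList (Lsub α) (a :: s) ++ [α]
            = α :: a :: (applyList (Lsub α) s ++ [α]) := by
          rw [applyList_cons, lsub_of_ne h]
          simp
        rw [he] at hf
        obtain ⟨h1, h2⟩ := factorAt_cons_elim hf
        obtain ⟨h3, h4⟩ := factorAt_cons_elim h2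
        have hwm : w m = a := by
          by_cases hwa : w m = α
          · exfalso
            have h5 := u_bS hu (m + 1)
            rw [bS_succ_alpha m hwa] at h5
            rw [h3] at h5
            exact h h5
          · have h5 := u_bS1 hu m hwa
            rw [h3] at h5
            exact h5.symm
        have hb : blockStart (Lsub α) w (m + 1) = blockStart (Lsub α) w m + 2 :=
          bS_succ_not m (by rw [hwm]; exact h)
        refine factorAt_cons hwm (ih (m + 1) ?_)
        rw [hb]
        rwa [show blockStart (Lsub α) w m + 1 + 1 = blockStart (Lsub α) w m + 2
          by omega] at h4

lemma desubL (hu : ApplyEq (Lsub α) w u) {y : List A} {p : ℕ}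
    (hf : FactorAt u (applyList (Lsub α) y ++ [α]) p) : Factor w y := by
  have h0 : u p = α := by
    have h1 := hf 0 (by simp)
    rw [L_head α y (by simp)] at h1
    simpa using h1.symm
  obtain ⟨m, rfl⟩ := alpha_pos hu h0
  exact ⟨m, desubL_aligned hu y m hf⟩

lemma parseL (hu : ApplyEq (Lsub α) w u) : ∀ (n : ℕ) (z : List A) (M : ℕ),
    z.length = n → FactorAt u z (blockStart (Lsub α) w M) →
    ∃ t r, r ≤ 1 ∧ z = applyList (Lsub α) t ++ List.replicate r α ∧ FactorAt w t M := by
  intro n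
  induction n using Nat.strong_induction_on with
  | _ n ih =>
    intro z M hlen hz
    cases z with
    | nil => exact ⟨[], 0, by omega, by simp [applyList_nil], factorAt_nil w M⟩
    | cons a z' =>
      obtain ⟨hz1, hz2⟩ := factorAt_cons_elim hz
      have ha : a = α := by rw [u_bS hu] at hz1; exact hz1.symm
      by_cases hw : w M = α
      · have hz2' : FactorAt u z' (blockStart (Lsub α) w (M + 1)) := by
          rw [bS_succ_alpha M hw]
          exact hz2
        obtain ⟨t, r, hr, hzt, hft⟩ := ih z'.length
          (by have hh := hlen; simp at hh; omega) z' (M + 1) rfl hz2'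
        refine ⟨α :: t, r, hr, ?_, factorAt_cons hw hft⟩
        rw [applyList_cons, lsub_self, hzt, ha]
        simp
      · cases z' with
        | nil =>
            refine ⟨[], 1, le_refl 1, ?_, factorAt_nil w M⟩
            simp [applyList_nil, ha]
        | cons b z'' =>
            obtain ⟨hz3, hz4⟩ := factorAt_cons_elim hz2
            have hbw : b = w M := by
              rw [u_bS1 hu M hw] at hz3
              exact hz3.symm
            have hz4' : FactorAt u z'' (blockStart (Lsub α) w (M + 1)) := by
              rw [bS_succ_not M hw]
              rwa [show blockStart (Lsub α) w M + 1 + 1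
                = blockStart (Lsub α) w M + 2 by omega] at hz4
            obtain ⟨t, r, hr, hzt, hft⟩ := ih z''.length
              (by have hh := hlen; simp at hh; omega) z'' (M + 1) rfl hz4'
            refine ⟨w M :: t, r, hr, ?_, factorAt_cons rfl hft⟩
            rw [applyList_cons, lsub_of_ne hw, hzt, hbw, ha]
            simp

end LW

section LEpi

variable [DecidableEq A] {α : A} {w u : ℕ → A}

lemma keyL' (hu : ApplyEq (Lsub α) w u) {β γ : A} {z : List A} {q1 q2 : ℕ}
    (hβγ : β ≠ γ) (hγα : γ ≠ α) (h1 : FactorAt u (β :: z) q1)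
    (h2 : FactorAt u (γ :: z) q2) (hz : z ≠ []) :
    ∃ t r, r ≤ 1 ∧ z = applyList (Lsub α) t ++ List.replicate r α ∧ LeftSpecial w t := by
  obtain ⟨h2a, h2b⟩ := factorAt_cons_elim h2
  obtain ⟨m, hm | ⟨hwm, hm⟩⟩ := classifyL (α := α) w q2
  · exfalso
    rw [hm, u_bS hu] at h2a
    exact hγα h2a.symm
  have hγ : w m = γ := by
    rw [hm, u_bS1 hu m hwm] at h2a
    exact h2a
  have hz2 : FactorAt u z (blockStart (Lsub α) w (m + 1)) := by
    rw [bS_succ_not m hwm]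
    rw [hm] at h2b
    rwa [show blockStart (Lsub α) w m + 1 + 1 = blockStart (Lsub α) w m + 2
      by omega] at h2b
  obtain ⟨c, z', rfl⟩ : ∃ c z', z = c :: z' := by
    cases z with
    | nil => exact absurd rfl hz
    | cons c z' => exact ⟨c, z', rfl⟩
  have hc : c = α := by
    have h6 := (factorAt_cons_elim hz2).1
    rw [u_bS hu] at h6
    exact h6.symm
  obtain ⟨h1a, h1b⟩ := factorAt_cons_elim h1
  have hq1 : u (q1 + 1) = α := by
    have h7 := (factorAt_cons_elim h1b).1
    rw [hc] at h7
    exact h7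
  obtain ⟨m', hm'⟩ := alpha_pos hu hq1
  have hm'pos : 1 ≤ m' := by
    rcases Nat.eq_zero_or_pos m' with h0 | h0
    · rw [h0] at hm'
      simp at hm'
    · exact h0
  have hβ : w (m' - 1) = β := by
    have hl := last_char hu (m' - 1)
    rw [show m' - 1 + 1 = m' by omega, ← hm',
      show q1 + 1 - 1 = q1 by omega, h1a] at hl
    exact hl.symm
  have hz1 : FactorAt u (c :: z') (blockStart (Lsub α) w m') := by
    rw [← hm']
    exact h1b
  obtain ⟨t1, r1, hr1, he1, hf1⟩ := parseL hu _ (c :: z') (m + 1) rfl hz2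
  obtain ⟨t2, r2, hr2, he2, hf2⟩ := parseL hu _ (c :: z') m' rfl hz1
  have hγt1 : FactorAt w (γ :: t1) m := factorAt_cons hγ hf1
  have hβt2 : FactorAt w (β :: t2) (m' - 1) := by
    refine factorAt_cons hβ ?_
    rwa [show m' - 1 + 1 = m' by omega]
  have hcomb := L_combine α hr1 hr2 (he1.symm.trans he2)
  rcases hcomb with ⟨hrr, htt⟩ | ⟨hr1', hr2', htt⟩ | ⟨hr2', hr1', htt⟩
  · refine ⟨t1, r1, hr1, he1, β, γ, hβγ, ⟨m' - 1, ?_⟩, ⟨m, hγt1⟩⟩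
    rw [htt]
    exact hβt2
  · have hβt1 : Factor w (β :: t1) :=
      ⟨m' - 1, prefix_factorAt hβt2 ⟨[α], by rw [htt]; simp⟩⟩
    exact ⟨t1, r1, hr1, he1, β, γ, hβγ, hβt1, ⟨m, hγt1⟩⟩
  · have hγt2 : Factor w (γ :: t2) :=
      ⟨m, prefix_factorAt hγt1 ⟨[α], by rw [htt]; simp⟩⟩
    exact ⟨t2, r2, hr2, he2, β, γ, hβγ, ⟨m' - 1, hβt2⟩, hγt2⟩

lemma keyL (hu : ApplyEq (Lsub α) w u) {z : List A} (hls : LeftSpecial u z)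
    (hz : z ≠ []) :
    ∃ t r, r ≤ 1 ∧ z = applyList (Lsub α) t ++ List.replicate r α ∧ LeftSpecial w t := by
  obtain ⟨β, γ, hβγ, ⟨q1, h1⟩, ⟨q2, h2⟩⟩ := hls
  by_cases hγα : γ = α
  · have hβα : β ≠ α := by rw [hγα] at hβγ; exact hβγ
    exact keyL' hu hβγ.symm hβα h2 h1 hz
  · exact keyL' hu hβγ hγα h1 h2 hz

lemma lsL_unique (hu : ApplyEq (Lsub α) w u) (hew : Episturmian w) :
    ∀ z z', LeftSpecial u z → LeftSpecial u z' → z.length = z'.length → z = z' := by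
  have step : ∀ (t : List A) (r : ℕ) (t' : List A) (r' : ℕ) (z z' : List A), r ≤ 1 →
      z = applyList (Lsub α) t ++ List.replicate r α →
      z' = applyList (Lsub α) t' ++ List.replicate r' α →
      t <+: t' → z.length = z'.length → z = z' := by
    intro t r t' r' z z' hr hz hz' hpre hlen
    obtain ⟨d, rfl⟩ := hpre
    cases d with
    | nil =>
        rw [List.append_nil] at hz'
        have hrr : r = r' := by
          subst hz hz'
          simp only [List.length_append, List.length_replicate] at hlen
          omega
        rw [hz, hz', hrr]
    | cons c s =>
        subst hz hz'
        refine List.IsPrefix.eq_of_length ?_ hlen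
        rw [applyList_append, applyList_cons, List.append_assoc]
        apply (List.prefix_append_right_inj _).2
        rw [lsub_eq_cons]
        interval_cases r
        · exact List.nil_prefix
        · simp only [List.replicate_one]
          exact ⟨(if c = α then [] else [c]) ++ (applyList (Lsub α) s
            ++ List.replicate r' α), by simp⟩
  intro z z' h1 h2 hlen
  rcases eq_or_ne z [] with rfl | hne
  · have : z'.length = 0 := by simpa using hlen.symm
    exact (List.length_eq_zero_iff.1 this).symm
  · have hne' : z' ≠ [] := by
      intro hh
      rw [hh] at hlen
      simp only [List.length_nil] at hlen
      exact hne (List.length_eq_zero_iff.1 hlen)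
    obtain ⟨t, r, hr, hz, hlst⟩ := keyL hu h1 hne
    obtain ⟨t', r', hr', hz', hlst'⟩ := keyL hu h2 hne'
    rcases ls_chain hew hlst hlst' with hp | hp
    · exact step t r t' r' z z' hr hz hz' hp hlen
    · exact (step t' r' t r z' z hr' hz' hz hp hlen.symm).symm

lemma closureL (hu : ApplyEq (Lsub α) w u) (hew : Episturmian w) :
    ∀ z, Factor u z → Factor u z.reverse := by
  rintro z ⟨p, hp⟩
  obtain ⟨n₀, d, hxf, hpd, hinf⟩ := cover (lsub_ne α) hu hp
  have hrev : z.reverse <:+: applyList (Lsub α) (seg w n₀ (d + z.length)).reverse ++ [α] := by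
    have hr1 : z.reverse <:+: (applyList (Lsub α) (seg w n₀ (d + z.length))).reverse :=
      List.reverse_infix.2 hinf
    have hr2 : (applyList (Lsub α) (seg w n₀ (d + z.length))).reverse
        <:+: α :: (applyList (Lsub α) (seg w n₀ (d + z.length))).reverse :=
      ⟨[α], [], by simp⟩
    have hr3 := hr1.trans hr2
    rwa [L_rev α _] at hr3
  obtain ⟨k, hk⟩ := hew.1 _ ⟨n₀, hxf⟩
  exact infix_factor (Limage hu hk) hrev

lemma epi_forward_L (hu : ApplyEq (Lsub α) w u) (hew : Episturmian w) :
    Episturmian u :=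
  ⟨closureL hu hew, lsL_unique hu hew⟩

lemma closureW_of_L (hu : ApplyEq (Lsub α) w u) (heu : Episturmian u) :
    ∀ x, Factor w x → Factor w x.reverse := by
  rintro x ⟨k, hk⟩
  obtain ⟨p, hp⟩ := heu.1 _ ⟨_, Limage hu hk⟩
  rw [List.reverse_append, List.reverse_singleton, List.singleton_append,
    L_rev α x] at hp
  exact desubL hu hp

lemma lsW_unique_of_L (hu : ApplyEq (Lsub α) w u) (heu : Episturmian u) :
    ∀ t t', LeftSpecial w t → LeftSpecial w t' → t.length = t'.length → t = t' := by
  have lift : ∀ t, LeftSpecial w t → LeftSpecial u (applyList (Lsub α) t ++ [α]) := by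
    rintro t ⟨β, γ, hβγ, ⟨k1, hk1⟩, ⟨k2, hk2⟩⟩
    have hfac : ∀ (δ : A) (k : ℕ), FactorAt w (δ :: t) k →
        Factor u (δ :: (applyList (Lsub α) t ++ [α])) := by
      intro δ k hk
      have h1 := Limage hu hk
      rw [applyList_cons, List.append_assoc] at h1
      by_cases hδ : δ = α
      · rw [hδ, lsub_self, List.singleton_append] at h1
        rw [hδ]
        exact ⟨_, h1⟩
      · rw [lsub_of_ne hδ,
          show [α, δ] ++ (applyList (Lsub α) t ++ [α])
            = α :: δ :: (applyList (Lsub α) t ++ [α]) by simp] at h1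
        exact ⟨_, (factorAt_cons_elim h1).2⟩
    exact ⟨β, γ, hβγ, hfac β k1 hk1, hfac γ k2 hk2⟩
  intro t t' h1 h2 hlen
  rcases ls_chain heu (lift t h1) (lift t' h2) with hp | hp
  · exact L_prefix_eq α t t' hp hlen
  · exact (L_prefix_eq α t' t hp hlen.symm).symm

lemma epi_backward_L (hu : ApplyEq (Lsub α) w u) (heu : Episturmian u) :
    Episturmian w :=
  ⟨closureW_of_L hu heu, lsW_unique_of_L hu heu⟩

end LEpi

section RSec

variable [DecidableEq A] {α : A} {w u : ℕ → A}

lemma seg_prefix (x : ℕ → A) (p : ℕ) {n m : ℕ} (h : n ≤ m) :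
    seg x p n <+: seg x p m :=
  ⟨seg x (p + n) (m - n), by rw [← seg_add, show n + (m - n) = m by omega]⟩

lemma rsub_len (α a : A) : (Rsub α a).length = (Lsub α a).length := by
  by_cases h : a = α <;> simp [h, lsub_self, lsub_of_ne, rsub_self, rsub_of_ne]

lemma bS_LR (α : A) (w : ℕ → A) (n : ℕ) :
    blockStart (Lsub α) w n = blockStart (Rsub α) w n := by
  induction n with
  | zero => rfl
  | succ n ih => rw [blockStart_succ, blockStart_succ, ih, rsub_len]

lemma u_bR (hu : ApplyEq (Rsub α) w u) (n : ℕ) :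
    u (blockStart (Rsub α) w n) = w n := by
  have h0 : 0 < (Rsub α (w n)).length := List.length_pos_iff.2 (rsub_ne α _)
  have h1 := hu n 0 h0
  rw [Nat.add_zero] at h1
  rw [h1]
  by_cases h : w n = α
  · simp [h, rsub_self]
  · simp [rsub_of_ne h]

lemma prev_alpha (hu : ApplyEq (Rsub α) w u) (n : ℕ) (h : 1 ≤ n) :
    u (blockStart (Rsub α) w n - 1) = α := by
  obtain ⟨n', rfl⟩ : ∃ n', n = n' + 1 := ⟨n - 1, by omega⟩
  by_cases hw : w n' = α
  · have hb : blockStart (Rsub α) w (n' + 1) = blockStart (Rsub α) w n' + 1 := by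
      rw [blockStart_succ]
      simp [hw, rsub_self]
    rw [hb, Nat.add_sub_cancel, u_bR hu, hw]
  · have hb : blockStart (Rsub α) w (n' + 1) = blockStart (Rsub α) w n' + 2 := by
      rw [blockStart_succ]
      simp [rsub_of_ne hw]
    have h1 := hu n' 1 (by simp [rsub_of_ne hw])
    rw [hb, show blockStart (Rsub α) w n' + 2 - 1
      = blockStart (Rsub α) w n' + 1 by omega, h1]
    simp [rsub_of_ne hw]

/-- the `L`-image word obtained by shifting the `R`-image word. -/
def shiftw (α : A) (u : ℕ → A) : ℕ → A := fun p => if p = 0 then α else u (p - 1)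

lemma shift_at_bS (hu : ApplyEq (Rsub α) w u) (n : ℕ) :
    shiftw α u (blockStart (Rsub α) w n) = α := by
  rcases Nat.eq_zero_or_pos n with rfl | hpos
  · show shiftw α u 0 = α
    simp [shiftw]
  · have hb1 : 1 ≤ blockStart (Rsub α) w n :=
      le_trans hpos (le_blockStart (rsub_ne α) n)
    unfold shiftw
    rw [if_neg (by omega)]
    exact prev_alpha hu n hpos

lemma applyEq_shift (hu : ApplyEq (Rsub α) w u) : ApplyEq (Lsub α) w (shiftw α u) := by
  intro n i hi
  have hi' := hi
  rw [lsub_len] at hi'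
  have hbr : blockStart (Lsub α) w n = blockStart (Rsub α) w n := bS_LR α w n
  by_cases h : w n = α
  · rw [if_pos h] at hi'
    interval_cases i
    · rw [Nat.add_zero, hbr, shift_at_bS hu n]
      simp [h, lsub_self]
  · rw [if_neg h] at hi'
    interval_cases i
    · rw [Nat.add_zero, hbr, shift_at_bS hu n]
      simp [lsub_of_ne h]
    · rw [hbr]
      have : shiftw α u (blockStart (Rsub α) w n + 1) = u (blockStart (Rsub α) w n) := by
        unfold shiftw
        rw [if_neg (by omega)]
        simp
      rw [this, u_bR hu]
      simp [lsub_of_ne h]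

lemma factor_shift_ur {z : List A} {p : ℕ} (h : FactorAt u z p) :
    FactorAt (shiftw α u) z (p + 1) := by
  intro i hi
  rw [h i hi]
  unfold shiftw
  rw [if_neg (by omega)]
  congr 1
  omega

lemma factor_shift_ru {z : List A} {p : ℕ} (h : FactorAt (shiftw α u) z p)
    (hp : 1 ≤ p) : FactorAt u z (p - 1) := by
  intro i hi
  rw [h i hi]
  unfold shiftw
  rw [if_neg (by omega)]
  congr 1
  omega

lemma epi_forward_R (hu : ApplyEq (Rsub α) w u) (hew : Episturmian w) :
    Episturmian u := by
  have hUL := applyEq_shift hu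
  have heL : Episturmian (shiftw α u) := epi_forward_L hUL hew
  apply epi_congr (w₁ := shiftw α u) ?_ heL
  intro z
  constructor
  · rintro ⟨p, hp⟩
    rcases Nat.eq_zero_or_pos p with rfl | hpos
    · obtain ⟨m, hm, hfm⟩ := recurrent_of_revclosed heL.1 z 0 hp 1
      exact ⟨m - 1, factor_shift_ru hfm hm⟩
    · exact ⟨p - 1, factor_shift_ru hp hpos⟩
  · rintro ⟨p, hp⟩
    exact ⟨p + 1, factor_shift_ur hp⟩

lemma epi_backward_R (hu : ApplyEq (Rsub α) w u) (heu : Episturmian u)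
    (hrec : ∀ x k, FactorAt w x k → ∀ N, ∃ m, N ≤ m ∧ FactorAt w x m) :
    Episturmian w := by
  have hUL := applyEq_shift hu
  have hfeq : ∀ z, Factor (shiftw α u) z ↔ Factor u z := by
    intro z
    constructor
    · rintro ⟨p, hp⟩
      rcases Nat.eq_zero_or_pos p with rfl | hpos
      · have hLx : FactorAt (shiftw α u)
            (applyList (Lsub α) (seg w 0 z.length) ++ [α]) 0 := by
          have h1 := Limage hUL (factorAt_seg w 0 z.length)
          simpa using h1
        have hlen1 : z.length ≤ (applyList (Lsub α) (seg w 0 z.length) ++ [α]).length := by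
          rw [List.length_append, length_applyList_seg]
          have := le_blockStart (v := w) (lsub_ne α) z.length
          simp only [List.length_singleton]
          omega
        have hzpre : z <+: applyList (Lsub α) (seg w 0 z.length) ++ [α] :=
          factorAt_prefix_of hp hLx hlen1
        rw [LR_id α _] at hzpre
        obtain ⟨k, hk, hfk⟩ := hrec _ 0 (factorAt_seg w 0 z.length) 1
        have hbk : 1 ≤ blockStart (Rsub α) w k :=
          le_trans hk (le_blockStart (rsub_ne α) k)
        have hRx : FactorAt u (α :: applyList (Rsub α) (seg w 0 z.length))
            (blockStart (Rsub α) w k - 1) := by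
          refine factorAt_cons (prev_alpha hu k hk) ?_
          rw [show blockStart (Rsub α) w k - 1 + 1 = blockStart (Rsub α) w k by omega]
          exact applyEq_factorAt hu hfk
        exact ⟨_, prefix_factorAt hRx hzpre⟩
      · exact ⟨p - 1, factor_shift_ru hp hpos⟩
    · rintro ⟨p, hp⟩
      exact ⟨p + 1, factor_shift_ur hp⟩
  have heL : Episturmian (shiftw α u) := epi_congr (fun z => (hfeq z).symm) heu
  exact epi_backward_L hUL heL

end RSec

end Stmt19

/-- if `f = L_α ∘ g` or `f = R_α ∘ g` (all nonerasing), then `f`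
preserves episturmian words iff `g` does. -/
theorem stmt19 {A : Type u} [DecidableEq A] [Fintype A] (hA : 2 ≤ Fintype.card A)
    (f g : A → List A) (hf : ∀ a, f a ≠ []) (hg : ∀ a, g a ≠ []) (α : A)
    (hcomp : f = comp2 (Lsub α) g ∨ f = comp2 (Rsub α) g) :
    PreservesEpi f ↔ PreservesEpi g := by
  constructor
  · intro hpf v wv hv hgvw
    have hvrec : ∀ x k, FactorAt v x k → ∀ N, ∃ m, N ≤ m ∧ FactorAt v x m :=
      Stmt19.recurrent_of_revclosed hv.1
    have hwrec := Stmt19.recur_transfer hg hgvw hvrec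
    rcases hcomp with rfl | rfl
    · have hLu : ApplyEq (Lsub α) wv (Stmt19.imageWord (Lsub α) wv) :=
        Stmt19.applyEq_imageWord (Stmt19.lsub_ne α) wv
      have hfu : ApplyEq (comp2 (Lsub α) g) v (Stmt19.imageWord (Lsub α) wv) :=
        Stmt19.applyEq_comp (Stmt19.lsub_ne α) hgvw hLu
      exact Stmt19.epi_backward_L hLu (hpf v _ hv hfu)
    · have hRu : ApplyEq (Rsub α) wv (Stmt19.imageWord (Rsub α) wv) :=
        Stmt19.applyEq_imageWord (Stmt19.rsub_ne α) wv
      have hfu : ApplyEq (comp2 (Rsub α) g) v (Stmt19.imageWord (Rsub α) wv) :=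
        Stmt19.applyEq_comp (Stmt19.rsub_ne α) hgvw hRu
      exact Stmt19.epi_backward_R hRu (hpf v _ hv hfu) hwrec
  · intro hpg v uu hv hfu
    rcases hcomp with rfl | rfl
    · have hgv : ApplyEq g v (Stmt19.imageWord g v) := Stmt19.applyEq_imageWord hg v
      have hepiw := hpg v _ hv hgv
      have hLu : ApplyEq (Lsub α) (Stmt19.imageWord g v) uu :=
        Stmt19.applyEq_comp_rev (Stmt19.lsub_ne α) hg hgv hfu
      exact Stmt19.epi_forward_L hLu hepiw
    · have hgv : ApplyEq g v (Stmt19.imageWord g v) := Stmt19.applyEq_imageWord hg v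
      have hepiw := hpg v _ hv hgv
      have hRu : ApplyEq (Rsub α) (Stmt19.imageWord g v) uu :=
        Stmt19.applyEq_comp_rev (Stmt19.rsub_ne α) hg hgv hfu
      exact Stmt19.epi_forward_R hRu hepiw
end
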